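/- Let H₁ = [[f₁,u₁],[g₁,v₁]] and H₂ = [[f₂,u₂],[g₂,v₂]] with all entries in L^∞. If R_{H₁}R_{H₂} = R_{H₂}R_{H₁} and f₁ = v₁, f₂ = v₂, then the operator W = ( V((conj(f₁))₋), (g₁)₋ ) ⊗ ( V((f₂)₋), (conj(u₂))₋ ) − ( V((conj(u₁))₋), (f₁)₋ ) ⊗ ( V((g₂)₋), (conj(f₂))₋ ) on L² ⊕ L² cannot be a rank-one operator. -/

import Mathlib

noncomputable section

open MeasureTheory Complex ComplexConjugate InnerProductSpace ContinuousLinearMap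

namespace GSIO

instance : Fact (0 < 2 * Real.pi) := ⟨by positivity⟩

/-- The circle, modeled as `ℝ / 2πℤ`. -/
abbrev Circ : Type := AddCircle (2 * Real.pi)

/-- Normalized Haar (arc-length) measure on the circle. -/
abbrev μC : Measure Circ := AddCircle.haarAddCircle

/-- `L²` of the circle. -/
abbrev L2 : Type := Lp ℂ 2 μC

/-- `L^∞` of the circle. -/
abbrev Linf : Type := Lp ℂ ⊤ μC

/-- The Hardy space `H²`: those `L²` functions whose negative Fourier coefficients vanish. -/
def Hardy : Submodule ℂ L2 where
  carrier := {f : L2 | ∀ n : ℤ, n < 0 → fourierCoeff (f : Circ → ℂ) n = 0}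
  zero_mem' := by
    intro n hn
    rw [← fourierBasis_repr]
    simp
  add_mem' := by
    intro a b ha hb n hn
    have ha' := ha n hn
    have hb' := hb n hn
    rw [← fourierBasis_repr] at ha' hb' ⊢
    rw [map_add, lp.coeFn_add, Pi.add_apply, ha', hb', add_zero]
  smul_mem' := by
    intro c a ha n hn
    have ha' := ha n hn
    rw [← fourierBasis_repr] at ha' ⊢
    rw [_root_.map_smul, lp.coeFn_smul, Pi.smul_apply, ha', smul_zero]

theorem isClosed_Hardy : IsClosed (Hardy : Set L2) := by
  have h : (Hardy : Set L2) =
      ⋂ n : {m : ℤ // m < 0}, (fun f : L2 =>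
        (innerSL ℂ (fourierBasis (T := 2 * Real.pi) n.1)) f) ⁻¹' {0} := by
    ext f
    simp only [Set.mem_iInter, Set.mem_preimage, Set.mem_singleton_iff, SetLike.mem_coe]
    constructor
    · intro hf n
      have h1 := hf n.1 n.2
      rw [← fourierBasis_repr, fourierBasis.repr_apply_apply] at h1
      simpa using h1
    · intro hf n hn
      have h1 := hf ⟨n, hn⟩
      rw [← fourierBasis_repr, fourierBasis.repr_apply_apply]
      simpa using h1
  rw [h]
  exact isClosed_iInter fun n =>
    isClosed_singleton.preimage (innerSL ℂ _).continuous

instance : CompleteSpace Hardy := isClosed_Hardy.completeSpace_coe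

/-- The Riesz projection `P₊`, i.e. the orthogonal projection of `L²` onto `H²`. -/
def Pp : L2 →L[ℂ] L2 := Hardy.subtypeL.comp (Hardy.orthogonalProjectionOnto)

/-- `P₋ = I − P₊`. -/
def Pm : L2 →L[ℂ] L2 := ContinuousLinearMap.id ℂ L2 - Pp

/-- The pointwise product of an `L^∞` function with an `L²` function, as an `L²` function. -/
def mulFun (φ : Linf) (x : L2) : L2 :=
  ((Lp.memLp x).smul (Lp.memLp φ)).toLp ((φ : Circ → ℂ) • (x : Circ → ℂ))

theorem mulFun_add (φ : Linf) (x y : L2) : mulFun φ (x + y) = mulFun φ x + mulFun φ y := by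
  rw [mulFun, mulFun, mulFun, ← MemLp.toLp_add]
  apply MemLp.toLp_congr
  filter_upwards [Lp.coeFn_add x y] with t ht
  have ht' : ((x + y : L2) : Circ → ℂ) t = (x : Circ → ℂ) t + (y : Circ → ℂ) t := by
    simpa using ht
  simp only [Pi.mul_apply, Pi.smul_apply, Pi.add_apply, smul_eq_mul, ht']
  ring

theorem mulFun_smul (c : ℂ) (φ : Linf) (x : L2) : mulFun φ (c • x) = c • mulFun φ x := by
  rw [mulFun, mulFun, ← MemLp.toLp_const_smul]
  apply MemLp.toLp_congr
  filter_upwards [Lp.coeFn_smul c x] with t ht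
  have ht' : ((c • x : L2) : Circ → ℂ) t = c * (x : Circ → ℂ) t := by
    simpa using ht
  simp only [Pi.mul_apply, Pi.smul_apply, smul_eq_mul, ht']
  ring

theorem norm_mulFun_le (φ : Linf) (x : L2) : ‖mulFun φ x‖ ≤ ‖φ‖ * ‖x‖ := by
  rw [mulFun, Lp.norm_toLp]
  have h := eLpNorm_smul_le_eLpNorm_top_mul_eLpNorm (μ := μC) 2
    (Lp.aestronglyMeasurable x) (φ : Circ → ℂ)
  refine le_trans (ENNReal.toReal_mono ?_ h) ?_
  · exact ENNReal.mul_ne_top (Lp.eLpNorm_ne_top φ) (Lp.eLpNorm_ne_top x)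
  · rw [ENNReal.toReal_mul, Lp.norm_def, Lp.norm_def]

/-- The multiplication operator `M_φ` on `L²`, for `φ ∈ L^∞`. -/
def mul (φ : Linf) : L2 →L[ℂ] L2 :=
  LinearMap.mkContinuous
    { toFun := mulFun φ
      map_add' := mulFun_add φ
      map_smul' := fun c x => mulFun_smul c φ x }
    ‖φ‖ (fun x => norm_mulFun_le φ x)

/-- Pointwise product in `L^∞`. -/
def mulInf (φ ψ : Linf) : Linf :=
  ((Lp.memLp ψ).smul (Lp.memLp φ)).toLp ((φ : Circ → ℂ) • (ψ : Circ → ℂ))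

/-- Complex conjugation on `L^∞`. -/
def conjInf (φ : Linf) : Linf :=
  (show MemLp (fun t => star ((φ : Circ → ℂ) t)) ⊤ μC from
    ⟨continuous_star.comp_aestronglyMeasurable (Lp.aestronglyMeasurable φ), by
      rw [eLpNorm_congr_norm_ae (g := (φ : Circ → ℂ))
        (Filter.Eventually.of_forall fun t => norm_star _)]
      exact Lp.eLpNorm_lt_top φ⟩).toLp _

/-- Complex conjugation on `L²`. -/
def conjL2 (x : L2) : L2 :=
  (show MemLp (fun t => star ((x : Circ → ℂ) t)) 2 μC from
    ⟨continuous_star.comp_aestronglyMeasurable (Lp.aestronglyMeasurable x), by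
      rw [eLpNorm_congr_norm_ae (g := (x : Circ → ℂ))
        (Filter.Eventually.of_forall fun t => norm_star _)]
      exact Lp.eLpNorm_lt_top x⟩).toLp _

/-- The inclusion `L^∞ ⊆ L²` (the measure is finite). -/
def toL2 (φ : Linf) : L2 := ((Lp.memLp φ).mono_exponent le_top).toLp φ

/-- The constant function `c` as an element of `L^∞`. -/
def constInf (c : ℂ) : Linf := (memLp_const c).toLp (fun _ => c)

/-- An `L^∞` function is constant (a.e.). -/
def IsConst (φ : Linf) : Prop := ∃ c : ℂ, φ = constInf c

/-- `φ ∈ H^∞ = L^∞ ∩ H²`: the negative Fourier coefficients of `φ` vanish. -/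
def MemHinf (φ : Linf) : Prop := ∀ n : ℤ, n < 0 → fourierCoeff (φ : Circ → ℂ) n = 0

/-- The coordinate function `z` as an element of `L^∞`. -/
def zInf : Linf := fourierLp (T := 2 * Real.pi) ⊤ 1

/-- The function `z̄` as an element of `L^∞`. -/
def zbarInf : Linf := fourierLp (T := 2 * Real.pi) ⊤ (-1)

/-- The antiunitary operator `V : h ↦ z̄ ⬝ conj h` on `L²`. -/
def Vmap (x : L2) : L2 := mul zbarInf (conjL2 x)

/-- `φ₋ = P₋ φ` for `φ ∈ L^∞`, viewed inside `L²`. -/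
def mI (φ : Linf) : L2 := Pm (toL2 φ)

/-- The rank-one operator `p ⊗ q : x ↦ ⟪x, q⟫ · p` (the inner product being conjugate-linear
in `q`). -/
def rankOne {E : Type*} [NormedAddCommGroup E] [InnerProductSpace ℂ E] (p q : E) : E →L[ℂ] E :=
  (innerSL ℂ q).smulRight p

/-- The Hilbert space direct sum `L² ⊕ L²`. -/
abbrev L2sq : Type := WithLp 2 (L2 × L2)

/-- A pair of `L²` functions, viewed as a vector in `L² ⊕ L²`. -/
def pair (x y : L2) : L2sq := (WithLp.equiv 2 (L2 × L2)).symm (x, y)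

/-- Notation for the pointwise product in `L^∞`. -/
scoped infixl:70 " ⊙ " => GSIO.mulInf

/-- The Toeplitz operator `T_φ = P₊ M_φ P₊` (viewed as acting on the corner `H²` of `L²`). -/
def Toeplitz (φ : Linf) : L2 →L[ℂ] L2 := Pp ∘L mul φ ∘L Pp

/-- The Hankel operator `H_φ = P₋ M_φ P₊ : H² → (H²)^⊥` (as a corner operator on `L²`). -/
def Hankel (φ : Linf) : L2 →L[ℂ] L2 := Pm ∘L mul φ ∘L Pp

/-- The dual Toeplitz operator `T̃_φ = P₋ M_φ P₋` on `(H²)^⊥` (as a corner operator on `L²`). -/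
def dualToeplitz (φ : Linf) : L2 →L[ℂ] L2 := Pm ∘L mul φ ∘L Pm

/-- The generalized Cauchy singular integral operator with symbol `[[f, u], [g, v]]`:
`R x = P₊ f P₊ x + P₋ g P₊ x + P₊ u P₋ x + P₋ v P₋ x`. -/
def Rop (f u g v : Linf) : L2 →L[ℂ] L2 :=
  Pp ∘L mul f ∘L Pp + Pm ∘L mul g ∘L Pp + Pp ∘L mul u ∘L Pm + Pm ∘L mul v ∘L Pm

/-- The singular integral operator `S_{f,g} = M_f P₊ + M_g P₋` on `L²`. -/
def Sop (f g : Linf) : L2 →L[ℂ] L2 := mul f ∘L Pp + mul g ∘L Pm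



/-- Negation `t ↦ -t` preserves the Haar measure of the circle. -/
theorem mp_neg : MeasurePreserving (fun t : Circ => -t) μC μC :=
  Measure.measurePreserving_neg μC

/-- Composition with `t ↦ -t` on `L²`. -/
def reflL2 : L2 →L[ℂ] L2 :=
  (Lp.compMeasurePreservingₗᵢ ℂ (fun t : Circ => -t) mp_neg).toContinuousLinearMap

/-- Composition with `t ↦ -t` on `L^∞`: for `φ ∈ L^∞`, `φ̃(z) = φ(z̄)`. -/
def reflInf (φ : Linf) : Linf := Lp.compMeasurePreserving (fun t : Circ => -t) mp_neg φ

/-- `φ* (z) = conj (φ(z̄))`. -/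
def starInf (φ : Linf) : Linf := conjInf (reflInf φ)

/-- The flip operator `J : (Jh)(z) = z̄ · h(z̄)` on `L²`. -/
def Jop : L2 →L[ℂ] L2 := mul zbarInf ∘L reflL2

/-- The Hankel operator `𝕳_φ = P₊ M_φ J` on `H²` (as a corner operator on `L²`). -/
def HankelPlus (φ : Linf) : L2 →L[ℂ] L2 := Pp ∘L mul φ ∘L Jop ∘L Pp

/-- The adjoint `H*_φ` of the Hankel operator `H_φ`. -/
def HankelAdj (φ : Linf) : L2 →L[ℂ] L2 := ContinuousLinearMap.adjoint (Hankel φ)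

/-- `θ ∈ L^∞` is an inner function: `θ ∈ H^∞` and `|θ| = 1` a.e. -/
def IsInner (θ : Linf) : Prop := MemHinf θ ∧ ∀ᵐ t ∂μC, ‖(θ : Circ → ℂ) t‖ = 1

/-- The orthogonal projection of `L²` onto `K_θ^⊥ = θH² ⊕ z̄·conj(H²)`, namely
`P₋ + M_θ P₊ M_{conj θ}`. -/
def Qproj (θ : Linf) : L2 →L[ℂ] L2 := Pm + mul θ ∘L Pp ∘L mul (conjInf θ)

/-!
Let `D (x, y) = (V y, V x)` on `L² ⊕ L²`, an antiunitary involution, and write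
`W = P₁ ⊗ Q₁ - P₂ ⊗ Q₂`. In the Fourier basis the matrix of `R_H` (with `f = v`) is Toeplitz
except across the row and column of index `-1`, so comparing the `(m, n)` and `(m + 1, n + 1)`
entries of `R_{H₁} R_{H₂} = R_{H₂} R_{H₁}` gives Fourier-coefficient identities which say exactly
that `W = DQ₂ ⊗ DP₂ - DQ₁ ⊗ DP₁`. Since `T ↦ D T* D` sends `a ⊗ b` to `Db ⊗ Da`, this reads
`D W* D = -W`. If `W = p ⊗ q`, then `Dq ⊗ Dp = -(p ⊗ q)` forces `Dq = λ p`, hence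
`q = conj λ · Dp` and `2λ = 0`, so `W = 0`, which does not have rank one.
-/

section Antiunitary

variable {E : Type*} [NormedAddCommGroup E] [InnerProductSpace ℂ E] {D : E → E}

theorem rankOne_apply (p q x : E) : rankOne p q x = ⟪q, x⟫_ℂ • p := rfl

theorem rankOne_ne_zero {p q : E} (hp : p ≠ 0) (hq : q ≠ 0) : rankOne p q ≠ 0 :=
  InnerProductSpace.rankOne_ne_zero hp hq

theorem rankOne_smul_left (c : ℂ) (p q : E) : rankOne (c • p) q = c • rankOne p q := by
  ext x
  simp only [rankOne_apply, smul_apply, smul_comm c]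

theorem rankOne_smul_right (c : ℂ) (p q : E) : rankOne p (c • q) = conj c • rankOne p q := by
  ext x
  simp only [rankOne_apply, smul_apply, inner_smul_left, smul_smul]

theorem map_smul_of_inner_map_map (hD : ∀ x y, ⟪D x, D y⟫_ℂ = ⟪y, x⟫_ℂ)
    (hDD : Function.Involutive D) (c : ℂ) (x : E) : D (c • x) = conj c • D x := by
  refine ext_inner_right ℂ fun y => ?_
  rw [← hDD y, hD, inner_smul_left, hD, inner_smul_right, Complex.conj_conj]

theorem inner_rankOne_antiswap (hD : ∀ x y, ⟪D x, D y⟫_ℂ = ⟪y, x⟫_ℂ)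
    (hDD : Function.Involutive D) (a b x y : E) :
    ⟪y, rankOne (D b) (D a) x⟫_ℂ = ⟪D x, rankOne a b (D y)⟫_ℂ := by
  rw [rankOne_apply, rankOne_apply, inner_smul_right, inner_smul_right]
  conv_rhs => rw [← hDD a, ← hDD b, hD, hD]
  ring

theorem rankOne_antiswap_eq_neg (hD : ∀ x y, ⟪D x, D y⟫_ℂ = ⟪y, x⟫_ℂ)
    (hDD : Function.Involutive D) {p q a b c d : E}
    (hW : rankOne p q = rankOne a b - rankOne c d)
    (h : rankOne a b - rankOne c d = rankOne (D d) (D c) - rankOne (D b) (D a)) :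
    rankOne (D q) (D p) = -rankOne p q := by
  ext x
  refine ext_inner_left ℂ fun y => ?_
  rw [inner_rankOne_antiswap hD hDD, neg_apply, hW]
  nth_rw 2 [h]
  simp only [sub_apply, inner_sub_right, inner_neg_right, inner_rankOne_antiswap hD hDD]
  ring

theorem rankOne_antiswap_ne_neg (hD : ∀ x y, ⟪D x, D y⟫_ℂ = ⟪y, x⟫_ℂ)
    (hDD : Function.Involutive D) {p q : E} (hp : p ≠ 0) (hq : q ≠ 0) :
    rankOne (D q) (D p) ≠ -rankOne p q := by
  intro h
  have hD_smul := map_smul_of_inner_map_map hD hDD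
  have hD_ne : ∀ {x : E}, x ≠ 0 → D x ≠ 0 := fun {x} hx hDx =>
    hx (by rw [← hDD x, hDx, ← zero_smul ℂ (0 : E), hD_smul, map_zero, zero_smul, zero_smul])
  have hpp : ⟪p, p⟫_ℂ ≠ 0 := inner_self_ne_zero.mpr hp
  -- evaluating `h` at `D p` shows that `D q` is a multiple of `p`
  set l : ℂ := -((⟪p, p⟫_ℂ)⁻¹ * ⟪q, D p⟫_ℂ)
  have hDq : D q = l • p := by
    have h1 := congrArg (fun T : E →L[ℂ] E => (⟪p, p⟫_ℂ)⁻¹ • T (D p)) h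
    simp only [rankOne_apply, neg_apply, hD, smul_smul, inv_mul_cancel₀ hpp, one_smul,
      smul_neg] at h1
    rw [h1, neg_smul]
  have hq_eq : q = conj l • D p := by rw [← hDD q, hDq, hD_smul]
  rw [hDq, hq_eq, rankOne_smul_left, rankOne_smul_right, Complex.conj_conj,
    eq_neg_iff_add_eq_zero, ← two_smul ℂ, smul_smul, smul_eq_zero] at h
  rcases h with hl | hR
  · exact hD_ne hq (by rw [hDq, (mul_eq_zero.mp hl).resolve_left two_ne_zero, zero_smul])
  · exact rankOne_ne_zero hp (hD_ne hp) hR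

theorem exists_eq_rankOne_of_rank_eq_one [CompleteSpace E] {T : E →L[ℂ] E}
    (hT : LinearMap.rank (T : E →ₗ[ℂ] E) = 1) : ∃ p q : E, p ≠ 0 ∧ q ≠ 0 ∧ T = rankOne p q := by
  obtain ⟨⟨v, hv_range⟩, hv0, hv⟩ := rank_eq_one_iff.mp hT
  have hv0' : v ≠ 0 := fun h => hv0 (Subtype.ext h)
  set p : E := (‖v‖⁻¹ : ℂ) • v
  have hp : ‖p‖ = 1 := by
    rw [norm_smul, norm_inv, Complex.norm_real, Real.norm_of_nonneg (norm_nonneg v),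
      inv_mul_cancel₀ (norm_ne_zero_iff.mpr hv0')]
  -- `T x ∈ ℂ p` with `‖p‖ = 1`, so `T x = ⟪p, T x⟫ p = ⟪T† p, x⟫ p`
  have hTx : ∀ x, T x = rankOne p (adjoint T p) x := by
    intro x
    obtain ⟨r, hr⟩ := hv ⟨T x, LinearMap.mem_range_self _ x⟩
    have hr' : T x = (r * ‖v‖) • p := by
      have hnv : (‖v‖ : ℂ) ≠ 0 := by exact_mod_cast norm_ne_zero_iff.mpr hv0'
      have hrv : r • v = T x := congrArg Subtype.val hr
      rw [← hrv, mul_smul, smul_smul (‖v‖ : ℂ), mul_inv_cancel₀ hnv, one_smul]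
    rw [rankOne_apply, adjoint_inner_left, hr', inner_smul_right,
      inner_self_eq_one_of_norm_eq_one hp, mul_one]
  have hT0 : T ≠ 0 := by
    rintro rfl
    simp at hT
  refine ⟨p, adjoint T p, norm_ne_zero_iff.mp (by rw [hp]; exact one_ne_zero), ?_, ext hTx⟩
  rintro hq
  exact hT0 (ext fun x => by rw [hTx, hq, rankOne_apply, inner_zero_left, zero_smul, zero_apply])

theorem rank_ne_one_of_eq_antiswap [CompleteSpace E] (hD : ∀ x y, ⟪D x, D y⟫_ℂ = ⟪y, x⟫_ℂ)
    (hDD : Function.Involutive D) {a b c d : E}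
    (h : rankOne a b - rankOne c d = rankOne (D d) (D c) - rankOne (D b) (D a)) :
    LinearMap.rank ((rankOne a b - rankOne c d : E →L[ℂ] E) : E →ₗ[ℂ] E) ≠ 1 := by
  intro hrank
  obtain ⟨p, q, hp, hq, hW⟩ := exists_eq_rankOne_of_rank_eq_one hrank
  exact rankOne_antiswap_ne_neg hD hDD hp hq (rankOne_antiswap_eq_neg hD hDD hW.symm h)

end Antiunitary

abbrev e (n : ℤ) : L2 := fourierBasis (T := 2 * Real.pi) n

def coeff (φ : Linf) (n : ℤ) : ℂ := fourierCoeff (φ : Circ → ℂ) n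

theorem inner_e (n : ℤ) (x : L2) : ⟪e n, x⟫_ℂ = fourierCoeff (x : Circ → ℂ) n := by
  rw [← fourierBasis_repr, fourierBasis.repr_apply_apply]

theorem inner_e_e (m n : ℤ) : ⟪e m, e n⟫_ℂ = if m = n then 1 else 0 :=
  orthonormal_iff_ite.mp fourierBasis.orthonormal m n

theorem coeFn_e (n : ℤ) : (e n : Circ → ℂ) =ᵐ[μC] fourier n := by
  rw [e, coe_fourierBasis]
  exact coeFn_fourierLp 2 n

theorem eq_of_inner_e {x y : L2} (h : ∀ n, ⟪e n, x⟫_ℂ = ⟪e n, y⟫_ℂ) : x = y :=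
  fourierBasis.repr.injective (lp.ext (funext fun n => by
    simp only [fourierBasis.repr_apply_apply, h]))

theorem eq_of_apply_e {S T : L2 →L[ℂ] L2} (h : ∀ n, S (e n) = T (e n)) : S = T := by
  refine ContinuousLinearMap.ext_on ?_ (Set.forall_mem_range.mpr h)
  rw [Submodule.dense_iff_topologicalClosure_eq_top]
  exact fourierBasis.dense_span

theorem coeFn_mul (φ : Linf) (x : L2) :
    (mul φ x : Circ → ℂ) =ᵐ[μC] fun t => (φ : Circ → ℂ) t * (x : Circ → ℂ) t := by
  rw [show mul φ x = mulFun φ x from rfl, mulFun]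
  exact MemLp.coeFn_toLp _

theorem coeFn_conjL2 (x : L2) : (conjL2 x : Circ → ℂ) =ᵐ[μC] fun t => conj ((x : Circ → ℂ) t) :=
  MemLp.coeFn_toLp _

theorem coeFn_conjInf (φ : Linf) :
    (conjInf φ : Circ → ℂ) =ᵐ[μC] fun t => conj ((φ : Circ → ℂ) t) :=
  MemLp.coeFn_toLp _

theorem coeFn_toL2 (φ : Linf) : (toL2 φ : Circ → ℂ) =ᵐ[μC] (φ : Circ → ℂ) :=
  MemLp.coeFn_toLp _

theorem coeFn_Vmap (x : L2) :
    (Vmap x : Circ → ℂ) =ᵐ[μC] fun t => fourier (-1) t * conj ((x : Circ → ℂ) t) := by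
  filter_upwards [coeFn_mul zbarInf (conjL2 x), coeFn_fourierLp (T := 2 * Real.pi) ⊤ (-1),
    coeFn_conjL2 x] with t h1 h2 h3
  rw [Vmap, h1, zbarInf, h2, h3]

theorem fourierCoeff_conj {T : ℝ} [Fact (0 < T)] (f : AddCircle T → ℂ) (n : ℤ) :
    fourierCoeff (fun t => conj (f t)) n = conj (fourierCoeff f (-n)) := by
  simp only [fourierCoeff, ← integral_conj, smul_eq_mul, map_mul, neg_neg, ← fourier_neg]

theorem coeff_conjInf (φ : Linf) (n : ℤ) : coeff (conjInf φ) n = conj (coeff φ (-n)) := by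
  rw [coeff, coeff, fourierCoeff_congr_ae (coeFn_conjInf φ), fourierCoeff_conj]

theorem inner_mul_left (φ : Linf) (x y : L2) : ⟪mul φ x, y⟫_ℂ = ⟪x, mul (conjInf φ) y⟫_ℂ := by
  rw [L2.inner_def, L2.inner_def]
  refine integral_congr_ae ?_
  filter_upwards [coeFn_mul φ x, coeFn_mul (conjInf φ) y, coeFn_conjInf φ] with t h1 h2 h3
  simp only [h1, h2, h3, RCLike.inner_apply, map_mul]
  ring

theorem inner_e_mul_e (φ : Linf) (m n : ℤ) : ⟪e m, mul φ (e n)⟫_ℂ = coeff φ (m - n) := by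
  rw [inner_e, coeff]
  refine integral_congr_ae ?_
  filter_upwards [coeFn_mul φ (e n), coeFn_e n] with t h1 h2
  rw [h1, h2, smul_eq_mul, smul_eq_mul, neg_sub, sub_eq_add_neg, fourier_add]
  ring

theorem hasSum_inner_e_mul (φ : Linf) (x : L2) (m : ℤ) :
    HasSum (fun k => coeff φ (m - k) * ⟪e k, x⟫_ℂ) ⟪e m, mul φ x⟫_ℂ := by
  rw [← inner_conj_symm, inner_mul_left, inner_conj_symm]
  refine (fourierBasis.hasSum_inner_mul_inner (mul (conjInf φ) (e m)) x).congr_fun fun k => ?_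
  change _ = ⟪mul (conjInf φ) (e m), e k⟫_ℂ * _
  rw [← inner_conj_symm (mul (conjInf φ) (e m)), inner_e_mul_e, coeff_conjInf,
    Complex.conj_conj, neg_sub]

theorem e_mem_Hardy {n : ℤ} (hn : 0 ≤ n) : e n ∈ Hardy := fun m hm => by
  rw [← inner_e, inner_e_e, if_neg (by omega)]

theorem Pp_eq_starProjection : Pp = Hardy.starProjection := rfl

theorem inner_e_Pp (m : ℤ) (x : L2) : ⟪e m, Pp x⟫_ℂ = if 0 ≤ m then ⟪e m, x⟫_ℂ else 0 := by
  split_ifs with hm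
  · rw [Pp_eq_starProjection, ← Submodule.inner_starProjection_left_eq_right,
      Submodule.starProjection_eq_self_iff.mpr (e_mem_Hardy hm)]
  · rw [inner_e]
    exact (Hardy.orthogonalProjectionOnto x).2 m (by omega)

theorem inner_e_Pm (m : ℤ) (x : L2) : ⟪e m, Pm x⟫_ℂ = if 0 ≤ m then 0 else ⟪e m, x⟫_ℂ := by
  rw [Pm, sub_apply, id_apply, inner_sub_right, inner_e_Pp]
  split_ifs <;> ring

theorem _root_.HasSum.eq_add_of_comp_add_one {α : Type*} [AddCommMonoid α] [TopologicalSpace α]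
    [ContinuousAdd α] [T2Space α] {F G : ℤ → α} {a b δ : α} (hF : HasSum F a) (hG : HasSum G b)
    (hFG : ∀ k, F (k + 1) = G k + if k = -1 then δ else 0) : a = b + δ := by
  have hF' : HasSum (fun k => F (k + 1)) a := (Equiv.addRight (1 : ℤ)).hasSum_iff.mpr hF
  exact hF'.unique ((hG.add (hasSum_ite_eq (-1 : ℤ) δ)).congr_fun hFG)

def ropMatrix (f u g : Linf) (m k : ℤ) : ℂ :=
  if 0 ≤ m then (if 0 ≤ k then coeff f (m - k) else coeff u (m - k))
  else (if 0 ≤ k then coeff g (m - k) else coeff f (m - k))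

theorem ropMatrix_add_one_add_one (f u g : Linf) {m k : ℤ} (hm : m ≠ -1) (hk : k ≠ -1) :
    ropMatrix f u g (m + 1) (k + 1) = ropMatrix f u g m k := by
  simp only [ropMatrix, add_sub_add_right_eq_sub]
  split_ifs <;> first | rfl | omega

theorem hasSum_inner_e_mul_Pp_add_mul_Pm (φ ψ : Linf) (x : L2) (m : ℤ) :
    HasSum (fun k => (if 0 ≤ k then coeff φ (m - k) else coeff ψ (m - k)) * ⟪e k, x⟫_ℂ)
      ⟪e m, mul φ (Pp x) + mul ψ (Pm x)⟫_ℂ := by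
  rw [inner_add_right]
  refine ((hasSum_inner_e_mul φ (Pp x) m).add (hasSum_inner_e_mul ψ (Pm x) m)).congr_fun
    fun k => ?_
  rw [inner_e_Pp, inner_e_Pm]
  split_ifs <;> ring

theorem hasSum_inner_e_Rop (f u g : Linf) (x : L2) (m : ℤ) :
    HasSum (fun k => ropMatrix f u g m k * ⟪e k, x⟫_ℂ) ⟪e m, Rop f u g f x⟫_ℂ := by
  have hR : ⟪e m, Rop f u g f x⟫_ℂ = if 0 ≤ m then ⟪e m, mul f (Pp x) + mul u (Pm x)⟫_ℂ
      else ⟪e m, mul g (Pp x) + mul f (Pm x)⟫_ℂ := by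
    simp only [Rop, add_apply, comp_apply, inner_add_right, inner_e_Pp, inner_e_Pm]
    split_ifs <;> ring
  by_cases hm : 0 ≤ m
  · simpa only [hR, ropMatrix, hm, if_true] using hasSum_inner_e_mul_Pp_add_mul_Pm f u x m
  · simpa only [hR, ropMatrix, hm, if_false] using hasSum_inner_e_mul_Pp_add_mul_Pm g f x m

theorem inner_e_Rop_e (f u g : Linf) (m n : ℤ) : ⟪e m, Rop f u g f (e n)⟫_ℂ = ropMatrix f u g m n :=
  (hasSum_inner_e_Rop f u g (e n) m).unique <| (hasSum_ite_eq n (ropMatrix f u g m n)).congr_fun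
    fun k => by rw [inner_e_e]; split_ifs <;> simp_all

theorem hasSum_inner_e_Rop_comp (f₁ u₁ g₁ f₂ u₂ g₂ : Linf) (m n : ℤ) :
    HasSum (fun k => ropMatrix f₁ u₁ g₁ m k * ropMatrix f₂ u₂ g₂ k n)
      ⟪e m, (Rop f₁ u₁ g₁ f₁ ∘L Rop f₂ u₂ g₂ f₂) (e n)⟫_ℂ := by
  simpa only [comp_apply, inner_e_Rop_e] using hasSum_inner_e_Rop f₁ u₁ g₁ (Rop f₂ u₂ g₂ f₂ (e n)) m

-- the matrices are Toeplitz away from the row and column `-1`, so shifting picks up one term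
theorem inner_e_Rop_comp_add_one (f₁ u₁ g₁ f₂ u₂ g₂ : Linf) {m n : ℤ} (hm : m ≠ -1)
    (hn : n ≠ -1) :
    ⟪e (m + 1), (Rop f₁ u₁ g₁ f₁ ∘L Rop f₂ u₂ g₂ f₂) (e (n + 1))⟫_ℂ =
      ⟪e m, (Rop f₁ u₁ g₁ f₁ ∘L Rop f₂ u₂ g₂ f₂) (e n)⟫_ℂ +
        (ropMatrix f₁ u₁ g₁ (m + 1) 0 * ropMatrix f₂ u₂ g₂ 0 (n + 1) -
          ropMatrix f₁ u₁ g₁ m (-1) * ropMatrix f₂ u₂ g₂ (-1) n) := by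
  refine (hasSum_inner_e_Rop_comp f₁ u₁ g₁ f₂ u₂ g₂ (m + 1) (n + 1)).eq_add_of_comp_add_one
    (hasSum_inner_e_Rop_comp f₁ u₁ g₁ f₂ u₂ g₂ m n) fun k => ?_
  by_cases hk : k = -1
  · subst hk
    norm_num
  · rw [if_neg hk, add_zero, ropMatrix_add_one_add_one _ _ _ hm hk,
      ropMatrix_add_one_add_one _ _ _ hk hn]

theorem ropMatrix_boundary_comm {f₁ u₁ g₁ f₂ u₂ g₂ : Linf}
    (hcomm : Rop f₁ u₁ g₁ f₁ ∘L Rop f₂ u₂ g₂ f₂ = Rop f₂ u₂ g₂ f₂ ∘L Rop f₁ u₁ g₁ f₁)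
    {m n : ℤ} (hm : m ≠ -1) (hn : n ≠ -1) :
    ropMatrix f₁ u₁ g₁ (m + 1) 0 * ropMatrix f₂ u₂ g₂ 0 (n + 1) -
        ropMatrix f₁ u₁ g₁ m (-1) * ropMatrix f₂ u₂ g₂ (-1) n =
      ropMatrix f₂ u₂ g₂ (m + 1) 0 * ropMatrix f₁ u₁ g₁ 0 (n + 1) -
        ropMatrix f₂ u₂ g₂ m (-1) * ropMatrix f₁ u₁ g₁ (-1) n := by
  have h₁₂ := inner_e_Rop_comp_add_one f₁ u₁ g₁ f₂ u₂ g₂ hm hn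
  have h₂₁ := inner_e_Rop_comp_add_one f₂ u₂ g₂ f₁ u₁ g₁ hm hn
  rw [hcomm] at h₁₂
  exact add_left_cancel (h₁₂.symm.trans h₂₁)

theorem inner_e_mI (k : ℤ) (ψ : Linf) : ⟪e k, mI ψ⟫_ℂ = if 0 ≤ k then 0 else coeff ψ k := by
  rw [mI, inner_e_Pm, inner_e, fourierCoeff_congr_ae (coeFn_toL2 ψ)]
  rfl

theorem inner_e_mI_conjInf (k : ℤ) (ψ : Linf) :
    ⟪e k, mI (conjInf ψ)⟫_ℂ = if 0 ≤ k then 0 else conj (coeff ψ (-k)) := by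
  rw [inner_e_mI, coeff_conjInf]

theorem inner_e_Vmap (k : ℤ) (x : L2) : ⟪e k, Vmap x⟫_ℂ = conj ⟪e (-1 - k), x⟫_ℂ := by
  rw [inner_e, inner_e, fourierCoeff_congr_ae (coeFn_Vmap x), show -1 - k = -(k + 1) by ring,
    ← fourierCoeff_conj]
  refine integral_congr_ae (.of_forall fun t => ?_)
  simp only [smul_eq_mul, neg_add, fourier_add]
  ring

theorem inner_e_Vmap_mI (k : ℤ) (ψ : Linf) :
    ⟪e k, Vmap (mI ψ)⟫_ℂ = if 0 ≤ k then conj (coeff ψ (-1 - k)) else 0 := by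
  rw [inner_e_Vmap, inner_e_mI]
  split_ifs <;> first | rfl | omega | simp

theorem inner_e_Vmap_mI_conjInf (k : ℤ) (ψ : Linf) :
    ⟪e k, Vmap (mI (conjInf ψ))⟫_ℂ = if 0 ≤ k then coeff ψ (k + 1) else 0 := by
  rw [inner_e_Vmap_mI, coeff_conjInf, Complex.conj_conj, neg_sub, sub_neg_eq_add]

theorem rankOne_sub_rankOne_eq_of_inner_e {a a' b b' c c' d d' : L2}
    (h : ∀ m n, ⟪e m, a⟫_ℂ * conj ⟪e n, c⟫_ℂ - ⟪e m, a'⟫_ℂ * conj ⟪e n, c'⟫_ℂ =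
      ⟪e m, b⟫_ℂ * conj ⟪e n, d⟫_ℂ - ⟪e m, b'⟫_ℂ * conj ⟪e n, d'⟫_ℂ) :
    rankOne a c - rankOne a' c' = rankOne b d - rankOne b' d' := by
  refine eq_of_apply_e fun n => eq_of_inner_e fun m => ?_
  have hconj (x : L2) : ⟪x, e n⟫_ℂ = conj ⟪e n, x⟫_ℂ := (inner_conj_symm x (e n)).symm
  simp only [sub_apply, rankOne_apply, inner_sub_right, inner_smul_right, hconj]
  linear_combination h m n

theorem fourier_neg_one_mul_conj (t : Circ) :
    fourier (-1) t * conj (fourier (T := 2 * Real.pi) (-1) t) = 1 := by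
  rw [← fourier_neg, ← fourier_add]
  norm_num

theorem Vmap_Vmap (x : L2) : Vmap (Vmap x) = x := by
  refine Lp.ext ?_
  filter_upwards [coeFn_Vmap (Vmap x), coeFn_Vmap x] with t h1 h2
  rw [h1, h2, map_mul, Complex.conj_conj, ← mul_assoc, fourier_neg_one_mul_conj, one_mul]

theorem inner_Vmap_Vmap (x y : L2) : ⟪Vmap x, Vmap y⟫_ℂ = ⟪y, x⟫_ℂ := by
  rw [L2.inner_def, L2.inner_def]
  refine integral_congr_ae ?_
  filter_upwards [coeFn_Vmap x, coeFn_Vmap y] with t h1 h2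
  have h := fourier_neg_one_mul_conj t
  simp only [h1, h2, RCLike.inner_apply, map_mul, Complex.conj_conj]
  linear_combination (conj ((y : Circ → ℂ) t) * (x : Circ → ℂ) t) * h

def Vswap (x : L2sq) : L2sq := pair (Vmap x.snd) (Vmap x.fst)

theorem Vswap_pair (x y : L2) : Vswap (pair x y) = pair (Vmap y) (Vmap x) := rfl

theorem Vswap_involutive : Function.Involutive Vswap := fun x => by
  change pair (Vmap (Vmap x.fst)) (Vmap (Vmap x.snd)) = x
  rw [Vmap_Vmap, Vmap_Vmap]
  rfl

theorem inner_pair (x y : L2) (z : L2sq) : ⟪pair x y, z⟫_ℂ = ⟪x, z.fst⟫_ℂ + ⟪y, z.snd⟫_ℂ :=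
  WithLp.prod_inner_apply _ _

theorem inner_Vswap_Vswap (x y : L2sq) : ⟪Vswap x, Vswap y⟫_ℂ = ⟪y, x⟫_ℂ := by
  rw [Vswap, inner_pair, WithLp.prod_inner_apply]
  exact (congrArg₂ (· + ·) (inner_Vmap_Vmap _ _) (inner_Vmap_Vmap _ _)).trans (add_comm _ _)

theorem inner_rankOne_pair (a b c d : L2) (x y : L2sq) :
    ⟪y, rankOne (pair a b) (pair c d) x⟫_ℂ =
      (⟪c, x.fst⟫_ℂ + ⟪d, x.snd⟫_ℂ) * (⟪y.fst, a⟫_ℂ + ⟪y.snd, b⟫_ℂ) := by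
  rw [rankOne_apply, inner_smul_right, inner_pair, WithLp.prod_inner_apply]
  rfl

theorem rankOne_pair_sub_rankOne_pair_eq {a₁ b₁ c₁ d₁ a₂ b₂ c₂ d₂ a₃ b₃ c₃ d₃ a₄ b₄ c₄ d₄ : L2}
    (h₁₁ : rankOne a₁ c₁ - rankOne a₂ c₂ = rankOne a₃ c₃ - rankOne a₄ c₄)
    (h₁₂ : rankOne a₁ d₁ - rankOne a₂ d₂ = rankOne a₃ d₃ - rankOne a₄ d₄)
    (h₂₁ : rankOne b₁ c₁ - rankOne b₂ c₂ = rankOne b₃ c₃ - rankOne b₄ c₄)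
    (h₂₂ : rankOne b₁ d₁ - rankOne b₂ d₂ = rankOne b₃ d₃ - rankOne b₄ d₄) :
    rankOne (pair a₁ b₁) (pair c₁ d₁) - rankOne (pair a₂ b₂) (pair c₂ d₂) =
      rankOne (pair a₃ b₃) (pair c₃ d₃) - rankOne (pair a₄ b₄) (pair c₄ d₄) := by
  ext x
  refine ext_inner_left ℂ fun y => ?_
  have block {p p' q q' r r' s s' : L2}
      (h : rankOne p q - rankOne p' q' = rankOne r s - rankOne r' s') (v w : L2) :
      ⟪q, v⟫_ℂ * ⟪w, p⟫_ℂ - ⟪q', v⟫_ℂ * ⟪w, p'⟫_ℂ = ⟪s, v⟫_ℂ * ⟪w, r⟫_ℂ - ⟪s', v⟫_ℂ * ⟪w, r'⟫_ℂ := by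
    simpa only [sub_apply, rankOne_apply, inner_sub_right, inner_smul_right] using
      congrArg (fun T => ⟪w, T v⟫_ℂ) h
  simp only [sub_apply, inner_sub_right, inner_rankOne_pair]
  linear_combination block h₁₁ x.fst y.fst + block h₁₂ x.snd y.fst + block h₂₁ x.fst y.snd +
    block h₂₂ x.snd y.snd

theorem coeff_boundary_comm {f₁ u₁ g₁ f₂ u₂ g₂ : Linf}
    (hcomm : Rop f₁ u₁ g₁ f₁ ∘L Rop f₂ u₂ g₂ f₂ = Rop f₂ u₂ g₂ f₂ ∘L Rop f₁ u₁ g₁ f₁)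
    {i a : ℤ} (hi : i ≠ 0) (ha : a ≠ 0) :
    (if 0 < i then coeff f₁ i else coeff g₁ i) * (if a < 0 then coeff f₂ a else coeff u₂ a) -
        (if 0 < i then coeff u₁ i else coeff f₁ i) * (if a < 0 then coeff g₂ a else coeff f₂ a) =
      (if 0 < i then coeff f₂ i else coeff g₂ i) * (if a < 0 then coeff f₁ a else coeff u₁ a) -
        (if 0 < i then coeff u₂ i else coeff f₂ i) *
          (if a < 0 then coeff g₁ a else coeff f₁ a) := by
  have h := ropMatrix_boundary_comm hcomm (m := i - 1) (n := -1 - a) (by omega) (by omega)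
  simp only [ropMatrix, sub_add_cancel, sub_zero, le_refl, if_true, if_false,
    show ¬(0 : ℤ) ≤ -1 by norm_num, show -1 - a + 1 = -a by ring, zero_sub, neg_neg,
    show i - 1 - -1 = i by ring, show -1 - (-1 - a) = a by ring, show 0 ≤ i ↔ 0 < i by omega,
    show 0 ≤ i - 1 ↔ 0 < i by omega, show 0 ≤ -a ↔ a < 0 by omega,
    show 0 ≤ -1 - a ↔ a < 0 by omega] at h
  exact h

theorem rankOne_sub_rankOne_eq_antiswap {f₁ u₁ g₁ f₂ u₂ g₂ : Linf}
    (hcomm : Rop f₁ u₁ g₁ f₁ ∘L Rop f₂ u₂ g₂ f₂ = Rop f₂ u₂ g₂ f₂ ∘L Rop f₁ u₁ g₁ f₁) :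
    let P₁ := pair (Vmap (mI (conjInf f₁))) (mI g₁)
    let Q₁ := pair (Vmap (mI f₂)) (mI (conjInf u₂))
    let P₂ := pair (Vmap (mI (conjInf u₁))) (mI f₁)
    let Q₂ := pair (Vmap (mI g₂)) (mI (conjInf f₂))
    rankOne P₁ Q₁ - rankOne P₂ Q₂ =
      rankOne (Vswap Q₂) (Vswap P₂) - rankOne (Vswap Q₁) (Vswap P₁) := by
  simp only [Vswap_pair, Vmap_Vmap]
  apply rankOne_pair_sub_rankOne_pair_eq <;>
    refine rankOne_sub_rankOne_eq_of_inner_e fun m n => ?_ <;>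
    (try simp only [inner_e_Vmap_mI_conjInf, inner_e_mI_conjInf]) <;>
    simp only [inner_e_Vmap_mI, inner_e_mI, apply_ite (starRingEnd ℂ), Complex.conj_conj,
      map_zero] <;>
    split_ifs with hm hn <;> try ring1
  -- the coefficients of `P₁` are `i ↦ if 0 < i then f̂₁ i else ĝ₁ i` (`i ≠ 0`), placed at
  -- `m = i - 1` in the first component and `m = i` in the second; the conjugated coefficients
  -- of `Q₁` are `a ↦ if a < 0 then f̂₂ a else û₂ a` (`a ≠ 0`), placed at `n = -1 - a` and `n = -a`
  all_goals
    have h := coeff_boundary_comm hcomm (i := if 0 ≤ m then m + 1 else m)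
      (a := if 0 ≤ n then -1 - n else -n) (by split_ifs; omega) (by split_ifs; omega)
    split_ifs at h <;> first | exact h | omega

/-- If `R_{H₁}` and `R_{H₂}` commute and `f₁ = v₁`, `f₂ = v₂`, then the
operator `W` on `L² ⊕ L²` below cannot have rank one. -/
theorem statement8 (f₁ u₁ g₁ v₁ f₂ u₂ g₂ v₂ : Linf)
    (hcomm : Rop f₁ u₁ g₁ v₁ ∘L Rop f₂ u₂ g₂ v₂ = Rop f₂ u₂ g₂ v₂ ∘L Rop f₁ u₁ g₁ v₁)
    (hf₁ : f₁ = v₁) (hf₂ : f₂ = v₂) :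
    LinearMap.rank
        ((rankOne (pair (Vmap (mI (conjInf f₁))) (mI g₁))
              (pair (Vmap (mI f₂)) (mI (conjInf u₂))) -
            rankOne (pair (Vmap (mI (conjInf u₁))) (mI f₁))
              (pair (Vmap (mI g₂)) (mI (conjInf f₂))) : L2sq →L[ℂ] L2sq) :
          L2sq →ₗ[ℂ] L2sq) ≠ 1 := by
  subst hf₁ hf₂
  exact rank_ne_one_of_eq_antiswap inner_Vswap_Vswap Vswap_involutive
    (rankOne_sub_rankOne_eq_antiswap hcomm)

end GSIO
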